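/- Let p and q be probability densities on ℝ^d (with respect to Lebesgue measure), let M > 0, and take λ_c = 1. If the idempotency loss L(q) = M · ∫ 𝟙{y : p(y) < q(y)} · q(y) dy equals 0, then q = p Lebesgue-almost everywhere. (Uniqueness part of Theorem 1: for λ_c = 1, the natural domain is the only minimizer of the idempotency loss.) -/
import Mathlib


open MeasureTheory

/-- Uniqueness part of Theorem 1: if `p` and `q` are probability densities on `ℝ^d`,
`M > 0`, and the idempotency loss with `λc = 1`,
`L(q) = M · ∫ 𝟙{y : p y < q y} · q y dy`, equals `0`, then `q = p`
Lebesgue-almost everywhere. -/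
theorem idempotency_loss_min_unique (d : ℕ)
    (p q : (Fin d → ℝ) → ℝ)
    (hp_meas : Measurable p)
    (hp_nonneg : ∀ᵐ y ∂(volume : Measure (Fin d → ℝ)), 0 ≤ p y)
    (hp_int : ∫ y, p y ∂(volume : Measure (Fin d → ℝ)) = 1)
    (hq_meas : Measurable q)
    (hq_nonneg : ∀ᵐ y ∂(volume : Measure (Fin d → ℝ)), 0 ≤ q y)
    (hq_int : ∫ y, q y ∂(volume : Measure (Fin d → ℝ)) = 1)
    (M : ℝ) (hM : 0 < M)
    (hloss : M * ∫ y, Set.indicator {y | p y < q y} q y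
        ∂(volume : Measure (Fin d → ℝ)) = 0) :
    q =ᵐ[(volume : Measure (Fin d → ℝ))] p := by
  set μ : Measure (Fin d → ℝ) := volume
  have hp_i : Integrable p μ := by
    by_contra h
    rw [integral_undef h] at hp_int
    norm_num at hp_int
  have hq_i : Integrable q μ := by
    by_contra h
    rw [integral_undef h] at hq_int
    norm_num at hq_int
  have hs : MeasurableSet {y | p y < q y} := measurableSet_lt hp_meas hq_meas
  have hind_i : Integrable (Set.indicator {y | p y < q y} q) μ := hq_i.indicator hs
  have hI : ∫ y, Set.indicator {y | p y < q y} q y ∂μ = 0 := by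
    rcases mul_eq_zero.mp hloss with h | h
    · exact absurd h (ne_of_gt hM)
    · exact h
  have hind_nonneg : 0 ≤ᵐ[μ] Set.indicator {y | p y < q y} q := by
    filter_upwards [hq_nonneg] with y hy
    by_cases hmem : y ∈ {y | p y < q y}
    · simpa [Set.indicator_of_mem hmem] using hy
    · simp [Set.indicator_of_notMem hmem]
  have hind_zero : Set.indicator {y | p y < q y} q =ᵐ[μ] 0 :=
    (integral_eq_zero_iff_of_nonneg_ae hind_nonneg hind_i).mp hI
  have hle : ∀ᵐ y ∂μ, q y ≤ p y := by
    filter_upwards [hind_zero, hp_nonneg] with y hzero hpy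
    by_contra hlt
    push_neg at hlt
    have hmem : y ∈ {y | p y < q y} := hlt
    rw [Set.indicator_of_mem hmem] at hzero
    simp only [Pi.zero_apply] at hzero
    linarith
  have hdiff_nonneg : 0 ≤ᵐ[μ] fun y => p y - q y := by
    filter_upwards [hle] with y hy
    simp only [Pi.zero_apply]
    linarith
  have hdiff_i : Integrable (fun y => p y - q y) μ := hp_i.sub hq_i
  have hdiff_int : ∫ y, (p y - q y) ∂μ = 0 := by
    rw [integral_sub hp_i hq_i, hp_int, hq_int]; ring
  have hdiff_zero : (fun y => p y - q y) =ᵐ[μ] 0 :=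
    (integral_eq_zero_iff_of_nonneg_ae hdiff_nonneg hdiff_i).mp hdiff_int
  filter_upwards [hdiff_zero] with y hy
  simp only [Pi.zero_apply] at hy
  linarith
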